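/- Let M = map(M') where M' is a stable matching in the reduced HR instance G'. If the HRLQ instance G admits a feasible matching, then M is feasible for G, i.e., every hospital h satisfies q^-(h) ≤ |M(h)| ≤ q^+(h). -/

import Mathlib

open Finset

attribute [local instance] Classical.propDecidable

namespace HRLQ

variable {R H : Type}

/-- Number of levels in the reduced HR instance (`T = 2` for `G'`, `T = |R|` for `G''`). -/
def ell (H : Type) [Fintype H] (T : ℕ) (qm : H → ℕ) : ℕ := T + ∑ h, qm h

/-- Dummy residents of the reduced instance: a dummy `⟨h, s, i⟩` is the `i`-th level-`s`
dummy resident corresponding to hospital `h`; levels run over `0,…,ℓ-2`, there are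
`q⁺(h)` dummies at levels `< T` and `q⁻(h)` dummies at levels `≥ T`. -/
def Dummy (H : Type) [Fintype H] (T : ℕ) (qp qm : H → ℕ) : Type :=
  {x : Σ h : H, Fin (ell H T qm) × Fin (qp h) //
    x.2.1.val ≤ ell H T qm - 2 ∧ (T ≤ x.2.1.val → x.2.2.val < qm x.1)}

noncomputable instance [Fintype H] (T : ℕ) (qp qm : H → ℕ) : Fintype (Dummy H T qp qm) := by
  classical
  unfold Dummy
  infer_instance

variable [Fintype H]

def Dummy.h {T : ℕ} {qp qm : H → ℕ} (d : Dummy H T qp qm) : H := d.1.1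
def Dummy.s {T : ℕ} {qp qm : H → ℕ} (d : Dummy H T qp qm) : ℕ := d.1.2.1.val
def Dummy.i {T : ℕ} {qp qm : H → ℕ} (d : Dummy H T qp qm) : ℕ := d.1.2.2.val

/-- Residents of the reduced instance: original residents plus dummies. -/
def Res (R H : Type) [Fintype H] (T : ℕ) (qp qm : H → ℕ) : Type := R ⊕ Dummy H T qp qm

/-- Hospitals of the reduced instance: level copies `h^s`, `s ∈ {0,…,ℓ-1}`. -/
def Hos (H : Type) [Fintype H] (T : ℕ) (qm : H → ℕ) : Type := H × Fin (ell H T qm)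

noncomputable instance [Fintype R] (T : ℕ) (qp qm : H → ℕ) : Fintype (Res R H T qp qm) := by
  unfold Res; infer_instance

instance (T : ℕ) (qm : H → ℕ) : Fintype (Hos H T qm) := by
  unfold Hos; infer_instance

/-- Capacity of the level copy `h^s`. -/
def cap (T : ℕ) (qp qm : H → ℕ) (hs : Hos H T qm) : ℕ :=
  if hs.2.val < T then qp hs.1 else qm hs.1

/-- Acceptability (edges) in the reduced instance. A level-`s` dummy of `h` is acceptable to
`h^s` and `h^{s+1}`, except that the first `q⁺(h) - q⁻(h)` dummies at level `T-1` only list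
`h^{T-1}`.  An original resident `r` is acceptable to every copy of each hospital on its list. -/
def edge (T : ℕ) (qp qm : H → ℕ) (E : R → H → Prop) :
    Res R H T qp qm → Hos H T qm → Prop
  | Sum.inl r, hs => E r hs.1
  | Sum.inr d, hs => d.h = hs.1 ∧
      (hs.2.val = d.s ∨
        (hs.2.val = d.s + 1 ∧ ¬(d.s = T - 1 ∧ d.i < qp hs.1 - qm hs.1)))

/-- Rank (smaller = better) that a dummy assigns to hospital copies. -/
noncomputable def dkey {T : ℕ} {qp qm : H → ℕ} (d : Dummy H T qp qm) (a : Hos H T qm) : ℕ :=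
  if a.1 = d.h ∧ a.2.val = d.s then 0
  else if a.1 = d.h ∧ a.2.val = d.s + 1 then 1 else 2

/-- Preferences of residents of the reduced instance over hospital copies:
an original resident prefers higher level copies, and within a level follows its original
ranking `rankR` (smaller rank = more preferred); a level-`s` dummy of `h` has list `⟨h^s, h^{s+1}⟩`. -/
def prefRes (T : ℕ) (qp qm : H → ℕ) (rankR : R → H → ℕ) :
    Res R H T qp qm → Hos H T qm → Hos H T qm → Prop
  | Sum.inl r, a, b => b.2.val < a.2.val ∨ (a.2.val = b.2.val ∧ rankR r a.1 < rankR r b.1)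
  | Sum.inr d, a, b => dkey d a < dkey d b

/-- Preference class of a resident in the list of `h^s`: level-`(s-1)` dummies of `h` first,
then original residents, then level-`s` dummies of `h`. -/
noncomputable def hclass {T : ℕ} {qp qm : H → ℕ} (hs : Hos H T qm) : Res R H T qp qm → ℕ
  | Sum.inl _ => 1
  | Sum.inr d =>
      if d.h = hs.1 ∧ 1 ≤ hs.2.val ∧ d.s = hs.2.val - 1 then 0
      else if d.h = hs.1 ∧ d.s = hs.2.val then 2 else 3

/-- Rank within a preference class. -/
def hinner {T : ℕ} {qp qm : H → ℕ} (rankH : H → R → ℕ) (hs : Hos H T qm) :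
    Res R H T qp qm → ℕ
  | Sum.inl r => rankH hs.1 r
  | Sum.inr d => d.i

/-- Preferences of hospital copies over residents of the reduced instance. -/
def prefHos (T : ℕ) (qp qm : H → ℕ) (rankH : H → R → ℕ) (hs : Hos H T qm)
    (x y : Res R H T qp qm) : Prop :=
  hclass hs x < hclass hs y ∨
    (hclass hs x = hclass hs y ∧ hinner rankH hs x < hinner rankH hs y)

variable [Fintype R]

/-- The set of residents matched to the hospital copy `hs`. -/
noncomputable def mset {T : ℕ} {qp qm : H → ℕ}
    (M : Res R H T qp qm → Option (Hos H T qm)) (hs : Hos H T qm) :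
    Finset (Res R H T qp qm) :=
  univ.filter (fun x => M x = some hs)

/-- `M` is a matching of the reduced (HR) instance: it respects acceptability and capacities. -/
def isMatchingRed (T : ℕ) (qp qm : H → ℕ) (E : R → H → Prop)
    (M : Res R H T qp qm → Option (Hos H T qm)) : Prop :=
  (∀ x hs, M x = some hs → edge T qp qm E x hs) ∧
    ∀ hs, (mset M hs).card ≤ cap T qp qm hs

/-- `(x, hs)` is a blocking pair for `M` in the reduced instance. -/
def blocksRed (T : ℕ) (qp qm : H → ℕ) (E : R → H → Prop) (rankR : R → H → ℕ)
    (rankH : H → R → ℕ) (M : Res R H T qp qm → Option (Hos H T qm))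
    (x : Res R H T qp qm) (hs : Hos H T qm) : Prop :=
  edge T qp qm E x hs ∧
    (∀ hs', M x = some hs' → prefRes T qp qm rankR x hs hs') ∧
    ((mset M hs).card < cap T qp qm hs ∨
      ∃ y ∈ mset M hs, prefHos T qp qm rankH hs x y)

/-- Stability in the reduced HR instance. -/
def stableRed (T : ℕ) (qp qm : H → ℕ) (E : R → H → Prop) (rankR : R → H → ℕ)
    (rankH : H → R → ℕ) (M : Res R H T qp qm → Option (Hos H T qm)) : Prop :=
  isMatchingRed T qp qm E M ∧ ∀ x hs, ¬ blocksRed T qp qm E rankR rankH M x hs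

/-- A hospital copy is active if it is matched to at least one non-dummy resident. -/
def active {T : ℕ} {qp qm : H → ℕ}
    (M : Res R H T qp qm → Option (Hos H T qm)) (hs : Hos H T qm) : Prop :=
  ∃ r : R, M (Sum.inl r) = some hs

/-- The matching of the original HRLQ instance obtained from a matching of the reduced
instance: `r` is matched to `h` iff `r` is matched to some level copy of `h`. -/
def mapToG {T : ℕ} {qp qm : H → ℕ}
    (M : Res R H T qp qm → Option (Hos H T qm)) : R → Option H :=
  fun r => (M (Sum.inl r)).map Prod.fst

/-- Set of residents matched to `h` in a matching of the original instance. -/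
noncomputable def msetO (N : R → Option H) (h : H) : Finset R :=
  univ.filter (fun r => N r = some h)

/-- Feasibility in the original HRLQ instance. -/
def feasibleO (E : R → H → Prop) (qp qm : H → ℕ) (N : R → Option H) : Prop :=
  (∀ r h, N r = some h → E r h) ∧
    ∀ h, qm h ≤ (msetO N h).card ∧ (msetO N h).card ≤ qp h

/-- Cardinality of a matching of the original instance. -/
noncomputable def sizeO (N : R → Option H) : ℕ :=
  (univ.filter (fun r : R => N r ≠ none)).card

/-- `r ∈ R_i`: `r` is matched to a level-`i` hospital copy (unmatched residents are in `R_0`). -/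
def inRlev {T : ℕ} {qp qm : H → ℕ}
    (M : Res R H T qp qm → Option (Hos H T qm)) (i : ℕ) (r : R) : Prop :=
  (∃ hs, M (Sum.inl r) = some hs ∧ hs.2.val = i) ∨ (M (Sum.inl r) = none ∧ i = 0)

/-- `h ∈ H_j`: the copy `h^j` is active (with the convention that a hospital matched to no
resident is placed in `H_{T-1}` if it has no lower quota and in `H_{ℓ-1}` otherwise). -/
def inHlev (T : ℕ) (qp qm : H → ℕ)
    (M : Res R H T qp qm → Option (Hos H T qm)) (j : ℕ) (h : H) : Prop :=
  (∃ s : Fin (ell H T qm), s.val = j ∧ active M (h, s)) ∨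
    ((∀ r, mapToG M r ≠ some h) ∧
      ((qm h = 0 ∧ j = T - 1) ∨ (0 < qm h ∧ j = ell H T qm - 1)))

/-- Residents matched to `h` in `Mo` but not in `N`. -/
noncomputable def Aset (Mo N : R → Option H) (h : H) : Finset R :=
  msetO Mo h \ msetO N h

/-- Residents matched to `h` in `N` but not in `Mo`. -/
noncomputable def Bset (Mo N : R → Option H) (h : H) : Finset R :=
  msetO N h \ msetO Mo h

/-- `σ h` is a correspondence chosen by hospital `h` between `N(h) ∖ Mo(h)` and
`Mo(h) ∖ N(h)`: it is injective, maps into `Mo(h) ∖ N(h)`, and pairs as many residents as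
possible (unpaired residents correspond to `⊥`). -/
def validCorr (Mo N : R → Option H) (σ : H → R → Option R) : Prop :=
  ∀ h,
    (∀ r' ∈ Bset Mo N h, ∀ r, σ h r' = some r → r ∈ Aset Mo N h) ∧
    (∀ r₁ ∈ Bset Mo N h, ∀ r₂ ∈ Bset Mo N h, ∀ r,
        σ h r₁ = some r → σ h r₂ = some r → r₁ = r₂) ∧
    ((∀ r ∈ Aset Mo N h, ∃ r' ∈ Bset Mo N h, σ h r' = some r) ∨
      (∀ r' ∈ Bset Mo N h, σ h r' ≠ none))

/-- The vote of resident `r` comparing partners `x` (in `N`) and `y` (in `Mo`):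
`1` if `r` prefers `x`, `-1` if `r` prefers `y`, `0` if they coincide. -/
noncomputable def rvote (rankR : R → H → ℕ) (r : R) (x y : Option H) : ℤ :=
  if x = y then 0
  else
    match x, y with
    | some a, some b => if rankR r a < rankR r b then 1 else -1
    | some _, none => 1
    | none, _ => -1

/-- The net vote of hospital `h` for `N` against `Mo`, given the correspondence `σ h`:
each resident of `N(h) ∖ Mo(h)` is compared with its corresponding resident of
`Mo(h) ∖ N(h)` (or with `⊥`), and each unpaired resident of `Mo(h) ∖ N(h)` contributes one
vote for `Mo`. -/
noncomputable def hvote (rankH : H → R → ℕ) (Mo N : R → Option H)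
    (σ : H → R → Option R) (h : H) : ℤ :=
  (∑ r' ∈ Bset Mo N h,
      (match σ h r' with
        | some r => if rankH h r' < rankH h r then (1 : ℤ) else -1
        | none => 1)) -
    ((Aset Mo N h).filter (fun r => ∀ r' ∈ Bset Mo N h, σ h r' ≠ some r)).card

/-- Total net vote for `N` against `Mo` (given correspondences `σ`). -/
noncomputable def totalVote (rankR : R → H → ℕ) (rankH : H → R → ℕ)
    (N Mo : R → Option H) (σ : H → R → Option R) : ℤ :=
  (∑ r : R, rvote rankR r (N r) (Mo r)) + ∑ h : H, hvote rankH Mo N σ h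

/-- `Mo` is popular among the feasible matchings of the HRLQ instance. -/
def popularAmongFeasible (E : R → H → Prop) (rankR : R → H → ℕ) (rankH : H → R → ℕ)
    (qp qm : H → ℕ) (Mo : R → Option H) : Prop :=
  ∀ N, feasibleO E qp qm N → ∀ σ, validCorr Mo N σ → totalVote rankR rankH N Mo σ ≤ 0

end HRLQ

/-!
Upper quotas: in a stable matching of the reduced instance the residents of `h` occupy at most
two adjacent copies `h^s, h^{s+1}`, and the dummies of level `s` that `h^{s+1}` ranks above
residents are all matched to these two copies and number `cap h^{s+1}`. Hence the two copies
together hold at most `cap h^s` residents, which is `q⁺(h)`, and `q⁻(h)` once `s ≥ T`.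

Lower quotas: if `h₀` is deficient, its top copy is undersubscribed, so every resident
acceptable to `h₀` is matched at the top level, and a hospital with a resident at level `t`
pushes its acceptable residents to level `t - 1` or higher. Pick a level `v ≥ T` that is no other
hospital's highest occupied level (there are more levels than hospitals with a lower quota).
Then the hospitals occupied above `v`, together with `h₀`, form a set `S` such that every
resident a feasible matching assigns to `S` is assigned to `S` by `M` as well; but `M` fills
`S` strictly below its lower quotas.
-/

namespace HRLQ

theorem sum_card_filter_eq_some {α β : Type} [Fintype α] (f : α → Option β) (S : Finset β) :
    ∑ b ∈ S, (univ.filter fun a => f a = some b).card =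
      (univ.filter fun a => ∃ b ∈ S, f a = some b).card := by
  rw [← card_biUnion]
  · congr 1
    ext a
    simp
  · intro b _ b' _ hne
    refine disjoint_filter.2 fun a _ hb hb' => hne ?_
    exact Option.some.inj (hb.symm.trans hb')

theorem sum_card_msetO_le_of_forall_exists {R H : Type} [Fintype R] (N N' : R → Option H)
    (S : Finset H) (h : ∀ r, ∀ a ∈ S, N r = some a → ∃ b ∈ S, N' r = some b) :
    ∑ a ∈ S, (msetO N a).card ≤ ∑ a ∈ S, (msetO N' a).card := by
  simp only [msetO, sum_card_filter_eq_some]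
  refine card_le_card fun r hr => ?_
  simp only [mem_filter, mem_univ, true_and] at hr ⊢
  obtain ⟨a, ha, hNa⟩ := hr
  exact h r a ha hNa

variable {R H : Type} [Fintype H] {T : ℕ} {qp qm : H → ℕ}

section Dummies

theorem Dummy.ext {d e : Dummy H T qp qm} (hh : d.h = e.h) (hs : d.s = e.s)
    (hi : d.i = e.i) : d = e := by
  obtain ⟨⟨dh, ds, di⟩, hd⟩ := d
  obtain ⟨⟨eh, es, ei⟩, he⟩ := e
  simp only [Dummy.h, Dummy.s, Dummy.i] at hh hs hi
  subst hh
  obtain rfl : ds = es := Fin.ext hs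
  obtain rfl : di = ei := Fin.ext hi
  rfl

theorem card_dummies_filter {g : H} (hq : qm g ≤ qp g) (t : Fin (ell H T qm))
    (ht : t.val ≤ ell H T qm - 2) (p : ℕ → Prop) :
    (univ.filter fun d : Dummy H T qp qm => d.h = g ∧ d.s = t.val ∧ p d.i).card =
      ((range (cap T qp qm (g, t))).filter p).card := by
  refine card_bij (fun d _ => d.i) ?_ ?_ ?_
  · intro d hd
    simp only [mem_filter, mem_univ, true_and] at hd
    obtain ⟨rfl, hs, hp⟩ := hd
    simp only [mem_filter, mem_range, cap]
    refine ⟨?_, hp⟩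
    split_ifs with hlt
    · exact d.1.2.2.isLt
    · exact d.2.2 (by simp only [Dummy.s] at hs; omega)
  · intro d hd e he hi
    simp only [mem_filter, mem_univ, true_and] at hd he
    exact Dummy.ext (hd.1.trans he.1.symm) (hd.2.1.trans he.2.1.symm) hi
  · intro i hi
    simp only [mem_filter, mem_range, cap] at hi
    obtain ⟨hi, hp⟩ := hi
    have hiqp : i < qp g := by split_ifs at hi <;> omega
    refine ⟨⟨⟨g, t, ⟨i, hiqp⟩⟩, ht, fun hT => ?_⟩, ?_, rfl⟩
    · simp only at hT ⊢
      rwa [if_neg (by omega)] at hi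
    · exact mem_filter.2 ⟨mem_univ _, rfl, rfl, hp⟩

noncomputable def ownDummies (c : Hos H T qm) : Finset (Dummy H T qp qm) :=
  univ.filter fun d => d.h = c.1 ∧ d.s = c.2.val

theorem card_ownDummies {g : H} (hq : qm g ≤ qp g) (t : Fin (ell H T qm))
    (ht : t.val ≤ ell H T qm - 2) : (ownDummies (qp := qp) (g, t)).card = cap T qp qm (g, t) := by
  simpa [ownDummies] using card_dummies_filter hq t ht (fun _ => True)

noncomputable def copies (g : H) : Finset (Hos H T qm) := univ.filter fun c => c.1 = g

theorem sum_card_ownDummies_copies (g : H) :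
    ∑ c ∈ (copies g : Finset (Hos H T qm)), (ownDummies (qp := qp) c).card =
      (univ.filter fun d : Dummy H T qp qm => d.h = g).card := by
  rw [← card_biUnion]
  · congr 1
    ext d
    simp only [copies, ownDummies, mem_filter, mem_univ, true_and, mem_biUnion]
    constructor
    · rintro ⟨c, rfl, h, -⟩
      exact h
    · rintro rfl
      exact ⟨(d.h, d.1.2.1), rfl, rfl, rfl⟩
  · intro c _ c' _ hne
    refine disjoint_filter.2 fun d _ h h' => hne (Prod.ext (h.1.symm.trans h'.1) ?_)
    exact Fin.ext (h.2.symm.trans h'.2)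

/-- The dummies that the copy `c` ranks above all original residents; each of them also
lists `c` in its preference list. -/
noncomputable def feeders (c : Hos H T qm) : Finset (Dummy H T qp qm) :=
  univ.filter fun d => d.h = c.1 ∧ d.s + 1 = c.2.val ∧ ¬(d.s = T - 1 ∧ d.i < qp c.1 - qm c.1)

theorem cap_le_card_feeders (hT : T ≠ 0) {g : H} (hq : qm g ≤ qp g) {t : Fin (ell H T qm)}
    (ht1 : 1 ≤ t.val) : cap T qp qm (g, t) ≤ (feeders (qp := qp) (g, t)).card := by
  have ht := t.isLt
  let t' : Fin (ell H T qm) := ⟨t.val - 1, by omega⟩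
  have hfeed : feeders (qp := qp) (g, t) = univ.filter fun d : Dummy H T qp qm =>
      d.h = g ∧ d.s = t'.val ∧ ¬(t.val - 1 = T - 1 ∧ d.i < qp g - qm g) := by
    ext d
    simp only [feeders, mem_filter, mem_univ, true_and, t']
    constructor
    · rintro ⟨h1, h2, h3⟩
      exact ⟨h1, by omega, by rwa [show d.s = t.val - 1 by omega] at h3⟩
    · rintro ⟨h1, h2, h3⟩
      exact ⟨h1, by omega, by rwa [h2]⟩
  have hcount : cap T qp qm (g, t) = ((range (cap T qp qm (g, t'))).filter
      fun i => ¬(t.val - 1 = T - 1 ∧ i < qp g - qm g)).card := by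
    simp only [cap, t']
    rcases lt_trichotomy t.val T with hlt | heq | hgt
    · rw [if_pos hlt, if_pos (by omega)]
      simp [show t.val - 1 ≠ T - 1 by omega]
    · rw [if_neg (by omega), if_pos (by omega)]
      simp only [heq, true_and, not_lt]
      rw [range_eq_Ico, Ico_filter_le, Nat.card_Ico]
      omega
    · rw [if_neg (by omega), if_neg (by omega)]
      simp [show t.val - 1 ≠ T - 1 by omega]
  rw [hcount, hfeed]
  exact Nat.le_of_eq (by convert (card_dummies_filter hq t' (show t.val - 1 ≤ _ by omega) _).symm)

end Dummies

section Matching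

variable {E : R → H → Prop} {rankR : R → H → ℕ} {rankH : H → R → ℕ}
  {M : Res R H T qp qm → Option (Hos H T qm)}

noncomputable def dums (M : Res R H T qp qm → Option (Hos H T qm)) (c : Hos H T qm) :
    Finset (Dummy H T qp qm) :=
  univ.filter fun d => M (Sum.inr d) = some c

theorem mem_dums {d : Dummy H T qp qm} {c : Hos H T qm} :
    d ∈ dums M c ↔ M (Sum.inr d) = some c := by
  simp [dums]

variable [Fintype R]

noncomputable def origs (M : Res R H T qp qm → Option (Hos H T qm)) (c : Hos H T qm) :
    Finset R :=
  univ.filter fun r => M (Sum.inl r) = some c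

theorem mem_mset {x : Res R H T qp qm} {c : Hos H T qm} : x ∈ mset M c ↔ M x = some c := by
  simp [mset]

theorem mem_origs {r : R} {c : Hos H T qm} : r ∈ origs M c ↔ M (Sum.inl r) = some c := by
  simp [origs]

theorem card_mset (c : Hos H T qm) :
    (mset M c).card = (origs M c).card + (dums M c).card := by
  simp only [mset, origs, dums, card_filter]
  exact Fintype.sum_sum_type _

theorem card_origs_add_card_dums_le (hM : isMatchingRed T qp qm E M) (c : Hos H T qm) :
    (origs M c).card + (dums M c).card ≤ cap T qp qm c :=
  card_mset (M := M) c ▸ hM.2 c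

theorem mem_msetO_mapToG {r : R} {g : H} :
    r ∈ msetO (mapToG M) g ↔ ∃ t, M (Sum.inl r) = some (g, t) := by
  rw [msetO, mem_filter]
  constructor
  · rintro ⟨-, h⟩
    obtain ⟨⟨g, t⟩, hc, rfl⟩ := Option.map_eq_some_iff.1 h
    exact ⟨t, hc⟩
  · rintro ⟨t, h⟩
    exact ⟨mem_univ r, Option.map_eq_some_iff.2 ⟨(g, t), h, rfl⟩⟩

theorem dummy_partner (hM : isMatchingRed T qp qm E M) {d : Dummy H T qp qm}
    {c : Hos H T qm} (h : M (Sum.inr d) = some c) :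
    c.1 = d.h ∧ (c.2.val = d.s ∨ c.2.val = d.s + 1) := by
  obtain ⟨hh, hs⟩ := hM.1 _ _ h
  exact ⟨hh.symm, hs.imp_right And.left⟩

theorem cap_of_le {g : H} {t : Fin (ell H T qm)} (ht : T ≤ t.val) :
    cap T qp qm (g, t) = qm g :=
  if_neg (not_lt.2 ht)

theorem cap_le_qp {g : H} (hq : qm g ≤ qp g) (t : Fin (ell H T qm)) :
    cap T qp qm (g, t) ≤ qp g := by
  unfold cap
  dsimp only
  split_ifs <;> omega

theorem qm_pos_of_partner (hM : isMatchingRed T qp qm E M) {r : R} {g : H}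
    {t : Fin (ell H T qm)} (h : M (Sum.inl r) = some (g, t)) (ht : T ≤ t.val) : 0 < qm g := by
  have hcap := card_origs_add_card_dums_le hM (g, t)
  have hr : 0 < (origs M (g, t)).card := card_pos.2 ⟨r, mem_origs.2 h⟩
  rw [cap_of_le ht] at hcap
  omega

theorem dkey_lt {d : Dummy H T qp qm} {c c' : Hos H T qm} (hc : c.1 = d.h ∧ c.2.val = d.s)
    (hc' : ¬(c'.1 = d.h ∧ c'.2.val = d.s)) : dkey d c < dkey d c' := by
  unfold dkey
  rw [if_pos hc, if_neg hc']
  split_ifs <;> omega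

/-- Each own-level dummy ranks `c` first, so an undersubscribed `c` would be blocked by one
of them. -/
theorem cap_le_card_mset {g : H} (hq : qm g ≤ qp g) (hst : stableRed T qp qm E rankR rankH M)
    (t : Fin (ell H T qm)) (ht : t.val ≤ ell H T qm - 2) :
    cap T qp qm (g, t) ≤ (mset M (g, t)).card := by
  by_contra hlt
  push Not at hlt
  have hown : ownDummies (qp := qp) (g, t) ⊆ dums M (g, t) := by
    intro d hd
    obtain ⟨hdh, hds⟩ := (mem_filter.1 hd).2
    by_contra hne
    refine hst.2 (Sum.inr d) (g, t) ⟨⟨hdh, Or.inl hds.symm⟩, fun c' hc' => ?_, Or.inl hlt⟩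
    refine dkey_lt ⟨hdh.symm, hds.symm⟩ fun ⟨h1, h2⟩ => hne (mem_dums.2 ?_)
    rwa [show c' = (g, t) from Prod.ext (h1.trans hdh) (Fin.ext (h2.trans hds))] at hc'
  have := card_le_card hown
  rw [card_ownDummies hq t ht] at this
  have := card_mset (M := M) (g, t)
  omega

/-- An acceptable resident matched below level `c.2` (or unmatched) would block `c` unless
`c` is full and holds no dummy it ranks below original residents. -/
theorem exists_partner_level_ge (hst : stableRed T qp qm E rankR rankH M) {r : R}
    {c : Hos H T qm} (hE : E r c.1)
    (h : (mset M c).card < cap T qp qm c ∨ ∃ d ∈ dums M c, d.s = c.2.val) :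
    ∃ c', M (Sum.inl r) = some c' ∧ c.2.val ≤ c'.2.val := by
  by_contra hlow
  push Not at hlow
  refine hst.2 (Sum.inl r) c ⟨hE, fun c' hc' => Or.inl (hlow c' hc'), ?_⟩
  rcases h with h | ⟨d, hd, hds⟩
  · exact Or.inl h
  · refine Or.inr ⟨Sum.inr d, mem_mset.2 (mem_dums.1 hd), Or.inl ?_⟩
    have hdh := (dummy_partner hst.1 (mem_dums.1 hd)).1
    show 1 < hclass c (Sum.inr d)
    simp only [hclass]
    rw [if_neg fun h => by omega, if_pos ⟨hdh.symm, hds⟩]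
    omega

theorem exists_partner_of_mem_feeders (hst : stableRed T qp qm E rankR rankH M) {r : R}
    {g : H} {t : Fin (ell H T qm)} (hr : M (Sum.inl r) = some (g, t)) {d : Dummy H T qp qm}
    (hd : d ∈ feeders (g, t)) :
    ∃ t', M (Sum.inr d) = some (g, t') ∧ (t' = t ∨ t'.val + 1 = t.val ∧ d.s = t'.val) := by
  obtain ⟨hdh, hds, hacc⟩ := (mem_filter.1 hd).2
  dsimp only at hdh hds hacc
  cases hd : M (Sum.inr d) with
  | none =>
    refine (hst.2 (Sum.inr d) (g, t) ⟨⟨hdh, Or.inr ⟨hds.symm, hacc⟩⟩, by simp [hd], ?_⟩).elim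
    refine Or.inr ⟨Sum.inl r, mem_mset.2 hr, Or.inl ?_⟩
    show hclass (g, t) (Sum.inr d) < 1
    simp only [hclass]
    rw [if_pos ⟨hdh, by omega, by omega⟩]
    omega
  | some c =>
    obtain ⟨hc1, hc2⟩ := dummy_partner hst.1 hd
    refine ⟨c.2, congrArg some (Prod.ext (hc1.trans hdh) rfl), ?_⟩
    rcases hc2 with hc2 | hc2
    · exact Or.inr ⟨by omega, hc2.symm⟩
    · exact Or.inl (Fin.ext (by omega))

end Matching

section Levels

variable [Fintype R] {E : R → H → Prop} {rankR : R → H → ℕ} {rankH : H → R → ℕ}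
  {M : Res R H T qp qm → Option (Hos H T qm)}

/-- All feeders of `g^{t₂}` are matched; were one of them at its own level `t₂ - 1 > t₁`,
`r₁` would block `g^{t₂ - 1}`. So all sit at `g^{t₂}`, which then overflows. -/
theorem level_le_succ_of_partners (hT : T ≠ 0) {g : H} (hq : qm g ≤ qp g)
    (hst : stableRed T qp qm E rankR rankH M) {r₁ r₂ : R} {t₁ t₂ : Fin (ell H T qm)}
    (h₁ : M (Sum.inl r₁) = some (g, t₁)) (h₂ : M (Sum.inl r₂) = some (g, t₂)) :
    t₂.val ≤ t₁.val + 1 := by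
  by_contra hfar
  push Not at hfar
  have hsub : feeders (qp := qp) (g, t₂) ⊆ dums M (g, t₂) := by
    intro d hd
    obtain ⟨t', ht', rfl | ⟨hlev, hds⟩⟩ := exists_partner_of_mem_feeders hst h₂ hd
    · exact mem_dums.2 ht'
    · obtain ⟨c, hc, hle⟩ := exists_partner_level_ge hst (c := (g, t')) (hst.1.1 _ _ h₁)
        (Or.inr ⟨d, mem_dums.2 ht', hds⟩)
      obtain rfl := Option.some.inj (h₁.symm.trans hc)
      dsimp only at hle
      omega
  have := (cap_le_card_feeders hT hq (t := t₂) (by omega)).trans (card_le_card hsub)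
  have := card_origs_add_card_dums_le hst.1 (g, t₂)
  have : 0 < (origs M (g, t₂)).card := card_pos.2 ⟨r₂, mem_origs.2 h₂⟩
  omega

theorem card_origs_add_card_origs_le (hT : T ≠ 0) {g : H} (hq : qm g ≤ qp g)
    (hst : stableRed T qp qm E rankR rankH M) {t t' : Fin (ell H T qm)}
    (htt' : t'.val = t.val + 1) {r : R} (hr : M (Sum.inl r) = some (g, t')) :
    (origs M (g, t)).card + (origs M (g, t')).card ≤ cap T qp qm (g, t) := by
  have hsub : feeders (qp := qp) (g, t') ⊆ dums M (g, t) ∪ dums M (g, t') := by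
    intro d hd
    obtain ⟨t'', h'', rfl | ⟨hlev, -⟩⟩ := exists_partner_of_mem_feeders hst hr hd
    · exact mem_union_right _ (mem_dums.2 h'')
    · obtain rfl : t'' = t := Fin.ext (by omega)
      exact mem_union_left _ (mem_dums.2 h'')
  have := (cap_le_card_feeders hT hq (t := t') (by omega)).trans
    ((card_le_card hsub).trans (card_union_le _ _))
  have := card_origs_add_card_dums_le hst.1 (g, t)
  have := card_origs_add_card_dums_le hst.1 (g, t')
  omega

theorem exists_card_msetO_mapToG_le_cap (hT : T ≠ 0) {g : H} (hq : qm g ≤ qp g)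
    (hst : stableRed T qp qm E rankR rankH M) {r₀ : R} {t₀ : Fin (ell H T qm)}
    (h₀ : M (Sum.inl r₀) = some (g, t₀)) :
    ∃ t : Fin (ell H T qm), t₀.val ≤ t.val + 1 ∧
      (msetO (mapToG M) g).card ≤ cap T qp qm (g, t) := by
  have hex : ∃ n, ∃ r t, M (Sum.inl r) = some (g, t) ∧ t.val = n := ⟨_, r₀, t₀, h₀, rfl⟩
  obtain ⟨rm, tm, hrm, htm⟩ := Nat.find_spec hex
  have hlev : ∀ r t, M (Sum.inl r) = some (g, t) → t.val = tm.val ∨ t.val = tm.val + 1 := by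
    intro r t h
    have := htm ▸ Nat.find_min' hex ⟨r, t, h, rfl⟩
    have := level_le_succ_of_partners hT hq hst hrm h
    omega
  refine ⟨tm, level_le_succ_of_partners hT hq hst hrm h₀, ?_⟩
  by_cases hup : ∃ r' t', M (Sum.inl r') = some (g, t') ∧ t'.val = tm.val + 1
  · obtain ⟨r', t', hr', ht'⟩ := hup
    have hsub : msetO (mapToG M) g ⊆ origs M (g, tm) ∪ origs M (g, t') := by
      intro r hr
      obtain ⟨t, ht⟩ := mem_msetO_mapToG.1 hr
      rcases hlev r t ht with h | h
      · exact mem_union_left _ (mem_origs.2 (Fin.ext h ▸ ht))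
      · exact mem_union_right _ (mem_origs.2 (Fin.ext (h.trans ht'.symm) ▸ ht))
    exact (card_le_card hsub).trans
      ((card_union_le _ _).trans (card_origs_add_card_origs_le hT hq hst ht' hr'))
  · push Not at hup
    have hsub : msetO (mapToG M) g ⊆ origs M (g, tm) := by
      intro r hr
      obtain ⟨t, ht⟩ := mem_msetO_mapToG.1 hr
      rcases hlev r t ht with h | h
      · exact mem_origs.2 (Fin.ext h ▸ ht)
      · exact absurd h (hup r t ht)
    have := card_origs_add_card_dums_le hst.1 (g, tm)
    have := card_le_card hsub
    omega

theorem card_msetO_mapToG_le_qp (hT : T ≠ 0) {g : H} (hq : qm g ≤ qp g)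
    (hst : stableRed T qp qm E rankR rankH M) : (msetO (mapToG M) g).card ≤ qp g := by
  obtain hempty | ⟨r, hr⟩ := (msetO (mapToG M) g).eq_empty_or_nonempty
  · simp [hempty]
  · obtain ⟨t₀, h₀⟩ := mem_msetO_mapToG.1 hr
    obtain ⟨t, -, hle⟩ := exists_card_msetO_mapToG_le_cap hT hq hst h₀
    exact hle.trans (cap_le_qp hq t)

theorem card_msetO_mapToG_le_qm (hT : T ≠ 0) {g : H} (hq : qm g ≤ qp g)
    (hst : stableRed T qp qm E rankR rankH M) {r₀ : R} {t₀ : Fin (ell H T qm)}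
    (h₀ : M (Sum.inl r₀) = some (g, t₀)) (ht₀ : T < t₀.val) :
    (msetO (mapToG M) g).card ≤ qm g := by
  obtain ⟨t, ht, hle⟩ := exists_card_msetO_mapToG_le_cap hT hq hst h₀
  rwa [cap_of_le (by omega)] at hle

/-- Since `g^{t₀}` holds `r₀`, not all of its feeders fit in it; one sits at its own level
`t₀ - 1` and forces every acceptable resident of `g` up to that level. -/
theorem exists_partner_level_ge_pred (hT : T ≠ 0) {g : H} (hq : qm g ≤ qp g)
    (hst : stableRed T qp qm E rankR rankH M) {r₀ : R} {t₀ : Fin (ell H T qm)}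
    (h₀ : M (Sum.inl r₀) = some (g, t₀)) (ht₀ : 1 ≤ t₀.val) {r : R} (hE : E r g) :
    ∃ c, M (Sum.inl r) = some c ∧ t₀.val ≤ c.2.val + 1 := by
  have hnsub : ¬feeders (qp := qp) (g, t₀) ⊆ dums M (g, t₀) := by
    intro hsub
    have := (cap_le_card_feeders hT hq ht₀).trans (card_le_card hsub)
    have := card_origs_add_card_dums_le hst.1 (g, t₀)
    have : 0 < (origs M (g, t₀)).card := card_pos.2 ⟨r₀, mem_origs.2 h₀⟩
    omega
  obtain ⟨d, hd, hdn⟩ := not_subset.1 hnsub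
  obtain ⟨t', ht', rfl | ⟨hlev, hds⟩⟩ := exists_partner_of_mem_feeders hst h₀ hd
  · exact absurd (mem_dums.2 ht') hdn
  · obtain ⟨c, hc, hle⟩ := exists_partner_level_ge hst (c := (g, t')) hE
      (Or.inr ⟨d, mem_dums.2 ht', hds⟩)
    exact ⟨c, hc, by dsimp only at hle; omega⟩

end Levels

section Top

variable [Fintype R] {E : R → H → Prop} {rankR : R → H → ℕ} {rankH : H → R → ℕ}
  {M : Res R H T qp qm → Option (Hos H T qm)}

theorem sum_card_origs_copies (M : Res R H T qp qm → Option (Hos H T qm)) (g : H) :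
    ∑ c ∈ copies g, (origs M c).card = (msetO (mapToG M) g).card := by
  simp only [origs, sum_card_filter_eq_some]
  congr 1
  ext r
  simp only [copies, mem_filter, mem_univ, true_and, mem_msetO_mapToG]
  constructor
  · rintro ⟨⟨b, t⟩, rfl, h⟩
    exact ⟨t, h⟩
  · rintro ⟨t, h⟩
    exact ⟨(g, t), rfl, h⟩

theorem sum_card_dums_copies_le (hM : isMatchingRed T qp qm E M) (g : H) :
    ∑ c ∈ copies g, (dums M c).card ≤ (univ.filter fun d : Dummy H T qp qm => d.h = g).card := by
  simp only [dums, sum_card_filter_eq_some]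
  refine card_le_card fun d hd => ?_
  simp only [copies, mem_filter, mem_univ, true_and] at hd ⊢
  obtain ⟨c, rfl, hc⟩ := hd
  exact (dummy_partner hM hc).1.symm

/-- Every dummy of `g` lives below the top level, and every copy of `g` below the top is full,
so the dummies can at most fill the lower copies. -/
theorem card_mset_top_le {g : H} (hq : qm g ≤ qp g) (hst : stableRed T qp qm E rankR rankH M)
    (top : Fin (ell H T qm)) (htop : top.val + 1 = ell H T qm) (hell : 2 ≤ ell H T qm) :
    (mset M (g, top)).card ≤ (msetO (mapToG M) g).card := by
  have htopC : ((g, top) : Hos H T qm) ∈ copies g := mem_filter.2 ⟨mem_univ _, rfl⟩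
  have hown_top : (ownDummies (qp := qp) (g, top)).card = 0 := by
    refine card_eq_zero.2 (filter_eq_empty_iff.2 fun d _ h => ?_)
    have hd : d.s ≤ ell H T qm - 2 := d.2.1
    have : d.s = top.val := h.2
    omega
  have hown_le : ∀ c ∈ (copies g).erase (g, top), (ownDummies (qp := qp) c).card ≤ (mset M c).card := by
    rintro ⟨b, t⟩ hc
    obtain ⟨hne, hc⟩ := mem_erase.1 hc
    obtain rfl : b = g := (mem_filter.1 hc).2
    have ht : t.val ≤ ell H T qm - 2 := by
      have : t.val ≠ top.val := fun h => hne (by rw [Fin.ext h])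
      omega
    exact (card_ownDummies hq t ht).le.trans (cap_le_card_mset hq hst t ht)
  have hown_total : ∑ c ∈ copies g, (ownDummies (qp := qp) c).card ≤
      ∑ c ∈ (copies g).erase (g, top), (mset M c).card :=
    (sum_erase (copies g) (f := fun c => (ownDummies (qp := qp) c).card) hown_top).ge.trans (sum_le_sum hown_le)
  have hsplit := add_sum_erase (copies g) (fun c => (mset M c).card) htopC
  have hsum_mset : ∑ c ∈ copies g, (mset M c).card =
      ∑ c ∈ copies g, (origs M c).card + ∑ c ∈ copies g, (dums M c).card := by
    rw [← sum_add_distrib]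
    exact sum_congr rfl fun c _ => card_mset c
  have := sum_card_origs_copies M g
  have := sum_card_dums_copies_le hst.1 g
  have := sum_card_ownDummies_copies (qp := qp) (T := T) (qm := qm) g
  omega

end Top

theorem exists_level_avoiding (T : ℕ) {g₀ : H} (hg₀ : 0 < qm g₀) (L : H → ℕ) :
    ∃ v, T ≤ v ∧ v < ell H T qm ∧ ∀ b ≠ g₀, 0 < qm b → L b ≠ v := by
  set B := (univ.erase g₀).filter fun b => 0 < qm b
  have hB : B.card ≤ ∑ b ∈ univ.erase g₀, qm b :=
    calc B.card ≤ ∑ b ∈ B, qm b := by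
          simpa using card_nsmul_le_sum B qm 1 fun b hb => (mem_filter.1 hb).2
      _ ≤ ∑ b ∈ univ.erase g₀, qm b := sum_le_sum_of_subset (filter_subset _ _)
  have hsum := sum_erase_add univ qm (mem_univ g₀)
  have hlt : (B.image L).card < (Ico T (ell H T qm)).card := by
    rw [Nat.card_Ico, ell]
    have := card_image_le (s := B) (f := L)
    omega
  obtain ⟨v, hv, hvL⟩ := exists_mem_notMem_of_card_lt_card hlt
  refine ⟨v, (mem_Ico.1 hv).1, (mem_Ico.1 hv).2, fun b hb hqb hLb => hvL ?_⟩
  exact mem_image.2 ⟨b, mem_filter.2 ⟨mem_erase.2 ⟨hb, mem_univ b⟩, hqb⟩, hLb⟩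

section LowerQuota

variable {E : R → H → Prop} {rankR : R → H → ℕ} {rankH : H → R → ℕ}
  {M : Res R H T qp qm → Option (Hos H T qm)}

noncomputable def maxActiveLevel (M : Res R H T qp qm → Option (Hos H T qm)) (g : H) : ℕ :=
  (univ.filter fun t : Fin (ell H T qm) => active M (g, t)).sup Fin.val

theorem le_maxActiveLevel {r : R} {g : H} {t : Fin (ell H T qm)}
    (h : M (Sum.inl r) = some (g, t)) : t.val ≤ maxActiveLevel M g :=
  le_sup (f := Fin.val) (mem_filter.2 ⟨mem_univ t, r, h⟩)

theorem exists_partner_eq_maxActiveLevel {g : H} (h : maxActiveLevel M g ≠ 0) :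
    ∃ r t, M (Sum.inl r) = some (g, t) ∧ t.val = maxActiveLevel M g := by
  obtain hempty | hne := (univ.filter fun t : Fin (ell H T qm) => active M (g, t)).eq_empty_or_nonempty
  · simp [maxActiveLevel, hempty] at h
  · obtain ⟨t, ht, hsup⟩ := exists_mem_eq_sup _ hne Fin.val
    obtain ⟨r, hr⟩ := (mem_filter.1 ht).2
    exact ⟨r, t, hr, hsup.symm⟩

variable [Fintype R]

theorem exists_partner_level_top_of_deficient (hT : T ≠ 0) {g₀ : H} (hq : qm g₀ ≤ qp g₀)
    (hst : stableRed T qp qm E rankR rankH M) (hdef : (msetO (mapToG M) g₀).card < qm g₀)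
    {r : R} (hE : E r g₀) : ∃ c, M (Sum.inl r) = some c ∧ ell H T qm ≤ c.2.val + 1 := by
  have hQ : qm g₀ ≤ ∑ h, qm h := single_le_sum (fun _ _ => Nat.zero_le _) (mem_univ g₀)
  let top : Fin (ell H T qm) := ⟨ell H T qm - 1, by rw [ell]; omega⟩
  have htop : T ≤ top.val := by simp only [top, ell]; omega
  have hunder : (mset M (g₀, top)).card < cap T qp qm (g₀, top) := by
    have := card_mset_top_le hq hst top (by simp only [top, ell]; omega) (by rw [ell]; omega)
    rw [cap_of_le htop]
    omega
  obtain ⟨c, hc, hle⟩ := exists_partner_level_ge hst (c := (g₀, top)) hE (Or.inl hunder)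
  exact ⟨c, hc, by simp only [top] at hle; omega⟩

theorem exists_partner_level_ge_of_lt_maxActiveLevel (hT : T ≠ 0) {g : H} (hq : qm g ≤ qp g)
    (hst : stableRed T qp qm E rankR rankH M) {v : ℕ} (hv : v < maxActiveLevel M g) {r : R}
    (hE : E r g) : ∃ c, M (Sum.inl r) = some c ∧ v ≤ c.2.val := by
  obtain ⟨r₀, t₀, h₀, ht₀⟩ := exists_partner_eq_maxActiveLevel (M := M) (g := g) (by omega)
  obtain ⟨c, hc, hle⟩ := exists_partner_level_ge_pred hT hq hst h₀ (by omega) hE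
  exact ⟨c, hc, by omega⟩

theorem card_msetO_mapToG_le_qm_of_lt_maxActiveLevel (hT : T ≠ 0) {g : H} (hq : qm g ≤ qp g)
    (hst : stableRed T qp qm E rankR rankH M) (hlev : T < maxActiveLevel M g) :
    (msetO (mapToG M) g).card ≤ qm g := by
  obtain ⟨r₀, t₀, h₀, ht₀⟩ := exists_partner_eq_maxActiveLevel (M := M) (g := g) (by omega)
  exact card_msetO_mapToG_le_qm hT hq hst h₀ (by omega)

theorem qm_le_card_msetO_mapToG (hT : T ≠ 0) (hq : ∀ h, qm h ≤ qp h)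
    (hst : stableRed T qp qm E rankR rankH M) {N : R → Option H} (hN : feasibleO E qp qm N)
    (g₀ : H) : qm g₀ ≤ (msetO (mapToG M) g₀).card := by
  by_contra hdef
  push Not at hdef
  obtain ⟨v, hTv, hv, hgap⟩ := exists_level_avoiding T (by omega : 0 < qm g₀) (maxActiveLevel M)
  let S := insert g₀ (univ.filter fun b => v < maxActiveLevel M b)
  have hclosed : ∀ r, ∀ a ∈ S, N r = some a → ∃ b ∈ S, mapToG M r = some b := by
    intro r a ha hNr
    have hE := hN.1 r a hNr
    obtain ⟨⟨b, t⟩, hc, hvt⟩ : ∃ c, M (Sum.inl r) = some c ∧ v ≤ c.2.val := by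
      rcases mem_insert.1 ha with rfl | ha
      · obtain ⟨c, hc, hle⟩ := exists_partner_level_top_of_deficient hT (hq a) hst hdef hE
        exact ⟨c, hc, by omega⟩
      · exact exists_partner_level_ge_of_lt_maxActiveLevel hT (hq a) hst (mem_filter.1 ha).2 hE
    dsimp only at hvt
    refine ⟨b, ?_, Option.map_eq_some_iff.2 ⟨(b, t), hc, rfl⟩⟩
    by_cases hb : b = g₀
    · exact hb ▸ mem_insert_self _ _
    · refine mem_insert_of_mem (mem_filter.2 ⟨mem_univ _, ?_⟩)
      have := le_maxActiveLevel hc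
      have := hgap b hb (qm_pos_of_partner hst.1 hc (by omega))
      omega
  have hupper : ∑ a ∈ S, (msetO (mapToG M) a).card < ∑ a ∈ S, qm a := by
    refine sum_lt_sum (fun a ha => ?_) ⟨g₀, mem_insert_self _ _, hdef⟩
    rcases mem_insert.1 ha with rfl | ha
    · exact hdef.le
    · exact card_msetO_mapToG_le_qm_of_lt_maxActiveLevel hT (hq a) hst
        (hTv.trans_lt (mem_filter.1 ha).2)
  have hlower : ∑ a ∈ S, qm a ≤ ∑ a ∈ S, (msetO N a).card := sum_le_sum fun a _ => (hN.2 a).1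
  have := sum_card_msetO_le_of_forall_exists N (mapToG M) S hclosed
  omega

theorem feasibleO_mapToG (hT : T ≠ 0) (hq : ∀ h, qm h ≤ qp h)
    (hst : stableRed T qp qm E rankR rankH M) (hex : ∃ N : R → Option H, feasibleO E qp qm N) :
    feasibleO E qp qm (mapToG M) := by
  obtain ⟨N, hN⟩ := hex
  refine ⟨fun r g hr => ?_, fun g => ⟨qm_le_card_msetO_mapToG hT hq hst hN g,
    card_msetO_mapToG_le_qp hT (hq g) hst⟩⟩
  obtain ⟨t, ht⟩ := mem_msetO_mapToG.1 (mem_filter.2 ⟨mem_univ r, hr⟩)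
  exact hst.1.1 _ _ ht

end LowerQuota

end HRLQ

open HRLQ Finset

/-- If the HRLQ instance `G` admits a feasible matching, then the matching `map M` of `G`
obtained from any stable matching `M` of the reduced HR instance `G'` is feasible for `G`. -/
theorem statement9 {R H : Type} [Fintype R] [Fintype H]
    (E : R → H → Prop) (rankR : R → H → ℕ) (rankH : H → R → ℕ) (qp qm : H → ℕ)
    (hq : ∀ h, qm h ≤ qp h)
    (M : Res R H 2 qp qm → Option (Hos H 2 qm))
    (hst : stableRed 2 qp qm E rankR rankH M)
    (hex : ∃ N : R → Option H, feasibleO E qp qm N) :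
    feasibleO E qp qm (mapToG M) :=
  feasibleO_mapToG two_ne_zero hq hst hex
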